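/- arXiv:2101.07126 — 2 statements merged into one kernel-verified Lean document; each statement's English description precedes it below -/
import Mathlib

section
/- Let ℓ_1, …, ℓ_n be n lines in ℝ², each given as the zero set of a non-constant affine functional on ℝ². Then the complement ℝ² \ (ℓ_1 ∪ ⋯ ∪ ℓ_n) has at most 1 + n(n+1)/2 connected components. -/
open Real

/-- The complement in `ℝ²` of the union of the `n` lines
`{x | a i 0 * x 0 + a i 1 * x 1 + b i = 0}`. -/
def lineCompl (n : ℕ) (a : Fin n → Fin 2 → ℝ) (b : Fin n → ℝ) : Set (Fin 2 → ℝ) :=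
  {x | ∀ i, a i 0 * x 0 + a i 1 * x 1 + b i ≠ 0}

/-- The set of connected components of a subset `S` of `ℝ²`. -/
def componentsIn (S : Set (Fin 2 → ℝ)) : Set (Set (Fin 2 → ℝ)) :=
  {C | ∃ x ∈ S, C = connectedComponentIn S x}

/-!
Cut `ℝ²` (or any finite-dimensional real vector space) into the cells on which every affine
functional has a fixed sign. A cell is an intersection of open half-spaces, hence convex, so it lies
in a single component of the complement; the components are therefore at most as many as the
realizable sign vectors. Adding a functional `g` to an arrangement splits exactly those sign vectors
of the others that occur on both sides of `{g = 0}`, and by convexity each of them already occurs on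
the hyperplane `{g = 0}`, an affine space of one dimension less. Writing `N_d(n)` for the maximal
number of sign vectors of `n` functionals in dimension `d`, this gives
`N_d(n + 1) ≤ N_d(n) + N_{d-1}(n)`, hence `N_d(n) ≤ ∑_{k ≤ d} (n choose k)`, which is
`1 + n(n+1)/2` for `d = 2`.
-/

open Set Finset Module

universe u

theorem Set.exists_image_image_eq_image {α β γ : Type*} [Nonempty α] {f : α → β} {g : α → γ}
    {s : Set α} (h : ∀ x ∈ s, ∀ y ∈ s, g x = g y → f x = f y) :
    ∃ F : γ → β, F '' (g '' s) = f '' s := by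
  refine ⟨f ∘ Function.invFunOn g s, ?_⟩
  rw [image_image]
  exact image_congr fun x hx => h _ (Function.invFunOn_mem ⟨x, hx, rfl⟩) x hx
    (Function.invFunOn_eq ⟨x, hx, rfl⟩)

theorem sum_range_choose_add_one (m d : ℕ) :
    ∑ k ∈ range (d + 2), (m + 1).choose k =
      ∑ k ∈ range (d + 2), m.choose k + ∑ k ∈ range (d + 1), m.choose k := by
  rw [sum_range_succ' (fun k => (m + 1).choose k), sum_range_succ' (fun k => m.choose k)]
  simp only [Nat.choose_succ_succ', sum_add_distrib, Nat.choose_zero_right]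
  ring

theorem sum_range_three_choose (n : ℕ) : ∑ k ∈ range 3, n.choose k = 1 + n * (n + 1) / 2 := by
  have : n * (n + 1) = n * (n - 1) + 2 * n := by cases n <;> simp; ring
  simp [sum_range_succ, Nat.choose_two_right]
  omega

variable {ι : Type*} {E : Type u} [AddCommGroup E] [Module ℝ E]

theorem Convex.exists_mem_apply_eq_zero {C : Set E} (hC : Convex ℝ C) (g : E →ᵃ[ℝ] ℝ)
    {x y : E} (hx : x ∈ C) (hy : y ∈ C) (hgx : 0 < g x) (hgy : g y < 0) :
    ∃ z ∈ C, g z = 0 := by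
  have hden : 0 < g x - g y := by linarith
  refine ⟨AffineMap.lineMap x y (g x / (g x - g y)),
    hC.lineMap_mem hx hy ⟨by positivity, (div_le_one hden).2 (by linarith)⟩, ?_⟩
  rw [AffineMap.apply_lineMap, AffineMap.lineMap_apply_module', smul_eq_mul]
  field_simp
  ring

namespace AffineMap

theorem linear_ne_zero_of_apply_eq_zero {g : E →ᵃ[ℝ] ℝ} (hg : g ≠ 0) {p : E} (hp : g p = 0) :
    g.linear ≠ 0 := by
  intro hl
  refine hg (AffineMap.ext fun x => ?_)
  simpa [hl, hp, eq_comm] using g.linearMap_vsub x p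

theorem exists_setOf_apply_eq_zero_subset_range (g : E →ᵃ[ℝ] ℝ) {p : E} (hp : g p = 0) :
    ∃ φ : LinearMap.ker g.linear →ᵃ[ℝ] E, {x | g x = 0} ⊆ range φ := by
  refine ⟨(AffineEquiv.vaddConst ℝ p).toAffineMap.comp
    (LinearMap.ker g.linear).subtype.toAffineMap, fun x hx => ?_⟩
  have hker : x - p ∈ LinearMap.ker g.linear := by
    rw [LinearMap.mem_ker, ← vsub_eq_sub, g.linearMap_vsub, hx, hp, vsub_self]
  exact ⟨⟨x - p, hker⟩, by simp⟩

end AffineMap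

-- A sign vector on `s` is encoded by the set `Q ⊆ s` of indices where it is positive.
def signCell (f : ι → E →ᵃ[ℝ] ℝ) (s : Finset ι) (Q : Set ι) : Set E :=
  {x | (∀ i ∈ s, i ∈ Q → 0 < f i x) ∧ ∀ i ∈ s, i ∉ Q → f i x < 0}

def signPatterns (f : ι → E →ᵃ[ℝ] ℝ) (s : Finset ι) (K : Set E) : Set (Set ι) :=
  {Q | Q ⊆ s ∧ (K ∩ signCell f s Q).Nonempty}

section SignPatterns

variable (f : ι → E →ᵃ[ℝ] ℝ) (s : Finset ι)

theorem convex_signCell (Q : Set ι) : Convex ℝ (signCell f s Q) := by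
  intro x hx y hy a b ha hb hab
  refine ⟨fun i hi hiQ => ?_, fun i hi hiQ => ?_⟩ <;> rw [Convex.combo_affine_apply hab]
  · exact convex_Ioi (0 : ℝ) (hx.1 i hi hiQ) (hy.1 i hi hiQ) ha hb hab
  · exact convex_Iio (0 : ℝ) (hx.2 i hi hiQ) (hy.2 i hi hiQ) ha hb hab

theorem signCell_subset (Q : Set ι) : signCell f s Q ⊆ {x | ∀ i ∈ s, f i x ≠ 0} := by
  intro x hx i hi
  by_cases hiQ : i ∈ Q
  · exact (hx.1 i hi hiQ).ne'
  · exact (hx.2 i hi hiQ).ne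

theorem mem_signCell_setOf {x : E} (hx : ∀ i ∈ s, f i x ≠ 0) :
    x ∈ signCell f s {i | i ∈ s ∧ 0 < f i x} :=
  ⟨fun _ _ hiQ => hiQ.2, fun i hi hiQ => (hx i hi).lt_of_le (not_lt.1 fun h => hiQ ⟨hi, h⟩)⟩

theorem eq_of_mem_signCell {Q Q' : Set ι} (hQ : Q ⊆ s) (hQ' : Q' ⊆ s) {x : E}
    (hx : x ∈ signCell f s Q) (hx' : x ∈ signCell f s Q') : Q = Q' := by
  ext i
  constructor
  · intro hi
    by_contra hi'
    exact (hx.1 i (hQ hi) hi).not_gt (hx'.2 i (hQ hi) hi')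
  · intro hi
    by_contra hi'
    exact (hx'.1 i (hQ' hi) hi).not_gt (hx.2 i (hQ' hi) hi')

theorem signCell_diff_singleton {j : ι} (hj : j ∉ s) (Q : Set ι) :
    signCell f s (Q \ {j}) = signCell f s Q := by
  have hmem : ∀ i ∈ s, i ∈ Q \ {j} ↔ i ∈ Q := fun i hi =>
    ⟨fun h => h.1, fun h => ⟨h, fun hij => hj (hij ▸ hi)⟩⟩
  ext x
  simp only [signCell, mem_ofPred_eq]
  exact and_congr (forall₂_congr fun i hi => by rw [hmem i hi])
    (forall₂_congr fun i hi => by rw [hmem i hi])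

theorem mem_signCell_insert [DecidableEq ι] {j : ι} {Q : Set ι} {x : E} :
    x ∈ signCell f (insert j s) Q ↔
      x ∈ signCell f s Q ∧ (j ∈ Q → 0 < f j x) ∧ (j ∉ Q → f j x < 0) := by
  simp only [signCell, mem_ofPred_eq, Finset.forall_mem_insert]
  tauto

theorem signPatterns_finite (K : Set E) : (signPatterns f s K).Finite :=
  s.finite_toSet.powerset.subset fun _ hQ => hQ.1

theorem signPatterns_mono {K L : Set E} (h : K ⊆ L) : signPatterns f s K ⊆ signPatterns f s L :=
  fun _ ⟨hQ, x, hxK, hx⟩ => ⟨hQ, x, h hxK, hx⟩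

theorem signPatterns_comp {F : Type*} [AddCommGroup F] [Module ℝ F] (φ : F →ᵃ[ℝ] E)
    (K : Set F) : signPatterns (fun i => (f i).comp φ) s K = signPatterns f s (φ '' K) := by
  ext Q
  have hcell : signCell (fun i => (f i).comp φ) s Q = φ ⁻¹' signCell f s Q := rfl
  exact and_congr_right fun _ => by rw [hcell, image_inter_nonempty_iff]

theorem ncard_signPatterns_le_one {K : Set E} (hK : K.Subsingleton) :
    (signPatterns f s K).ncard ≤ 1 := by
  refine (ncard_le_one (signPatterns_finite f s K)).2 ?_
  rintro Q ⟨hQ, x, hxK, hx⟩ Q' ⟨hQ', x', hxK', hx'⟩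
  rw [hK hxK' hxK] at hx'
  exact eq_of_mem_signCell f s hQ hQ' hx hx'

theorem ncard_signPatterns_empty_le (K : Set E) : (signPatterns f ∅ K).ncard ≤ 1 := by
  have h : ∀ Q ∈ signPatterns f ∅ K, Q = ∅ := fun Q hQ =>
    subset_empty_iff.1 (by simpa using hQ.1)
  exact (ncard_le_one (signPatterns_finite f ∅ K)).2 fun Q hQ Q' hQ' =>
    (h Q hQ).trans (h Q' hQ').symm

theorem signPatterns_insert_of_eq_zero [DecidableEq ι] {j : ι} (hj : f j = 0) (K : Set E) :
    signPatterns f (insert j s) K = ∅ := by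
  refine eq_empty_of_forall_notMem fun Q ⟨_, x, _, hx⟩ => ?_
  by_cases hjQ : j ∈ Q
  · simpa [hj] using hx.1 j (mem_insert_self j s) hjQ
  · simpa [hj] using hx.2 j (mem_insert_self j s) hjQ

theorem signPatterns_pos_inter_neg_subset (j : ι) :
    signPatterns f s {x | 0 < f j x} ∩ signPatterns f s {x | f j x < 0} ⊆
      signPatterns f s {x | f j x = 0} := by
  rintro Q ⟨⟨hQ, x, hxj, hx⟩, -, y, hyj, hy⟩
  obtain ⟨z, hz, hzj⟩ := (convex_signCell f s Q).exists_mem_apply_eq_zero (f j) hx hy hxj hyj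
  exact ⟨hQ, z, hzj, hz⟩

theorem signPatterns_insert_subset [DecidableEq ι] {j : ι} (hj : j ∉ s) :
    signPatterns f (insert j s) univ ⊆
      insert j '' signPatterns f s {x | 0 < f j x} ∪ signPatterns f s {x | f j x < 0} := by
  rintro Q ⟨hQ, x, -, hx⟩
  obtain ⟨hxs, hpos, hneg⟩ := (mem_signCell_insert f s).1 hx
  by_cases hjQ : j ∈ Q
  · refine Or.inl ⟨Q \ {j}, ⟨fun i hi => ?_, x, hpos hjQ, ?_⟩, ?_⟩
    · exact (Finset.mem_insert.1 (hQ hi.1)).resolve_left hi.2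
    · rwa [signCell_diff_singleton f s hj]
    · exact insert_sdiff_singleton.trans (insert_eq_of_mem hjQ)
  · refine Or.inr ⟨fun i hi => ?_, x, hneg hjQ, hxs⟩
    exact (Finset.mem_insert.1 (hQ hi)).resolve_left (ne_of_mem_of_not_mem hi hjQ)

theorem ncard_signPatterns_insert_le [DecidableEq ι] {j : ι} (hj : j ∉ s) :
    (signPatterns f (insert j s) univ).ncard ≤
      (signPatterns f s univ).ncard + (signPatterns f s {x | f j x = 0}).ncard := by
  set A := signPatterns f s {x | 0 < f j x}
  set B := signPatterns f s {x | f j x < 0}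
  have hfin := signPatterns_finite f s
  calc _ ≤ (insert j '' A ∪ B).ncard :=
        ncard_le_ncard (signPatterns_insert_subset f s hj) (((hfin _).image _).union (hfin _))
    _ ≤ (insert j '' A).ncard + B.ncard := ncard_union_le _ _
    _ ≤ A.ncard + B.ncard := Nat.add_le_add_right (ncard_image_le (hfin _)) _
    _ = (A ∪ B).ncard + (A ∩ B).ncard :=
        (ncard_union_add_ncard_inter _ _ (hfin _) (hfin _)).symm
    _ ≤ _ := Nat.add_le_add
      (ncard_le_ncard (union_subset (signPatterns_mono f s (subset_univ _))
        (signPatterns_mono f s (subset_univ _))) (hfin _))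
      (ncard_le_ncard (signPatterns_pos_inter_neg_subset f s j) (hfin _))

end SignPatterns

theorem ncard_signPatterns_le_sum_choose [FiniteDimensional ℝ E] (f : ι → E →ᵃ[ℝ] ℝ)
    (s : Finset ι) :
    (signPatterns f s univ).ncard ≤ ∑ k ∈ range (finrank ℝ E + 1), s.card.choose k := by
  classical
  generalize hd : finrank ℝ E = d
  induction d generalizing E s with
  | zero =>
    have : Subsingleton E := (finrank_eq_zero_iff_of_free ℝ E).1 hd
    simpa using ncard_signPatterns_le_one f s subsingleton_univ
  | succ d ih =>
    induction s using Finset.induction_on with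
    | empty => simpa [sum_range_succ'] using ncard_signPatterns_empty_le f univ
    | insert j s hj ihs =>
      by_cases hfj : f j = 0
      · simp [signPatterns_insert_of_eq_zero f s hfj]
      have hZ : (signPatterns f s {x | f j x = 0}).ncard ≤
          ∑ k ∈ range (d + 1), s.card.choose k := by
        rcases {x | f j x = 0}.eq_empty_or_nonempty with hZ | ⟨p, hp⟩
        · simp [hZ, signPatterns]
        have hker : finrank ℝ (LinearMap.ker (f j).linear) = d := by
          have := Module.Dual.finrank_ker_add_one_of_ne_zero
            ((f j).linear_ne_zero_of_apply_eq_zero hfj hp)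
          omega
        obtain ⟨φ, hφ⟩ := (f j).exists_setOf_apply_eq_zero_subset_range hp
        calc _ ≤ (signPatterns f s (range φ)).ncard :=
              ncard_le_ncard (signPatterns_mono f s hφ) (signPatterns_finite f s _)
          _ = _ := by rw [← image_univ, ← signPatterns_comp]
          _ ≤ _ := ih _ s hker
      calc _ ≤ _ := ncard_signPatterns_insert_le f s hj
        _ ≤ _ := Nat.add_le_add ihs hZ
        _ = _ := by rw [card_insert_of_notMem hj, sum_range_choose_add_one]

section Components

variable [TopologicalSpace E] [IsTopologicalAddGroup E] [ContinuousSMul ℝ E]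
  (f : ι → E →ᵃ[ℝ] ℝ) (s : Finset ι)

theorem connectedComponentIn_eq_of_mem_signCell {Q : Set ι} {x y : E}
    (hx : x ∈ signCell f s Q) (hy : y ∈ signCell f s Q) :
    connectedComponentIn {z | ∀ i ∈ s, f i z ≠ 0} x =
      connectedComponentIn {z | ∀ i ∈ s, f i z ≠ 0} y :=
  connectedComponentIn_eq <| (convex_signCell f s Q).isPreconnected.subset_connectedComponentIn
    hx (signCell_subset f s Q) hy

theorem ncard_connectedComponentIn_image_le :
    (connectedComponentIn {z | ∀ i ∈ s, f i z ≠ 0} '' {z | ∀ i ∈ s, f i z ≠ 0}).Finite ∧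
      (connectedComponentIn {z | ∀ i ∈ s, f i z ≠ 0} '' {z | ∀ i ∈ s, f i z ≠ 0}).ncard ≤
        (signPatterns f s univ).ncard := by
  set S := {z | ∀ i ∈ s, f i z ≠ 0}
  set σ : E → Set ι := fun x => {i | i ∈ s ∧ 0 < f i x}
  have hσ : σ '' S ⊆ signPatterns f s univ := by
    rintro _ ⟨x, hx, rfl⟩
    exact ⟨fun i hi => hi.1, x, mem_univ x, mem_signCell_setOf f s hx⟩
  obtain ⟨F, hF⟩ := exists_image_image_eq_image (f := connectedComponentIn S) (g := σ) (s := S)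
    fun x hx y hy (hxy : σ x = σ y) => by
      refine connectedComponentIn_eq_of_mem_signCell f s (mem_signCell_setOf f s hx) ?_
      change y ∈ signCell f s (σ x)
      rw [hxy]
      exact mem_signCell_setOf f s hy
  have hfin := (signPatterns_finite f s univ).subset hσ
  rw [← hF]
  exact ⟨hfin.image F,
    (ncard_image_le hfin).trans (ncard_le_ncard hσ (signPatterns_finite f s univ))⟩

end Components

def lineFunctional (c : Fin 2 → ℝ) (d : ℝ) : (Fin 2 → ℝ) →ᵃ[ℝ] ℝ :=
  (c 0 • LinearMap.proj 0 + c 1 • LinearMap.proj 1 : (Fin 2 → ℝ) →ₗ[ℝ] ℝ).toAffineMap +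
    AffineMap.const ℝ (Fin 2 → ℝ) d

@[simp]
theorem lineFunctional_apply (c : Fin 2 → ℝ) (d : ℝ) (x : Fin 2 → ℝ) :
    lineFunctional c d x = c 0 * x 0 + c 1 * x 1 + d := by
  simp [lineFunctional]

theorem line_arrangement_region_count_general (n : ℕ) (a : Fin n → Fin 2 → ℝ) (b : Fin n → ℝ) :
    (componentsIn (lineCompl n a b)).Finite ∧
    (componentsIn (lineCompl n a b)).ncard ≤ 1 + n * (n + 1) / 2 := by
  set f : Fin n → (Fin 2 → ℝ) →ᵃ[ℝ] ℝ := fun i => lineFunctional (a i) (b i)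
  have hS : lineCompl n a b = {x | ∀ i ∈ Finset.univ, f i x ≠ 0} := by
    simp [lineCompl, f]
  have hC : componentsIn (lineCompl n a b) =
      connectedComponentIn (lineCompl n a b) '' lineCompl n a b := by
    ext C
    simp [componentsIn, eq_comm]
  obtain ⟨hfin, hle⟩ := ncard_connectedComponentIn_image_le f Finset.univ
  rw [hC, hS]
  refine ⟨hfin, hle.trans ((ncard_signPatterns_le_sum_choose f _).trans ?_)⟩
  rw [finrank_fin_fun, card_univ, Fintype.card_fin, sum_range_three_choose]

/-- The complement of an arrangement of `n` lines in `ℝ²` has at most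
`1 + n(n+1)/2` connected components. -/
theorem line_arrangement_region_count (n : ℕ) (a : Fin n → Fin 2 → ℝ) (b : Fin n → ℝ)
    (ha : ∀ i, a i ≠ 0) :
    (componentsIn (lineCompl n a b)).Finite ∧
    (componentsIn (lineCompl n a b)).ncard ≤ 1 + n * (n + 1) / 2 :=
  line_arrangement_region_count_general n a b
end

section
/- Let R ⊆ ℝ² be a convex set and let g : ℝ² → ℝ^p be a function that agrees with an affine map on R. Then for every w ≥ 1, A ∈ ℝ^(w×p) and b ∈ ℝ^w, there exist at most 1 + w(w+1)/2 convex sets whose union is R such that the map x ↦ σ(A·g(x) + b) agrees with an affine map ℝ² → ℝ^w on each of them. -/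
open Real

/-- Componentwise ReLU. -/
noncomputable def relu {n : ℕ} (z : Fin n → ℝ) : Fin n → ℝ := fun j => max (z j) 0

/-!
Each output coordinate `(A g(x) + b)_j` is an affine functional `ℓ_j` on `R`, and `σ` is affine on
each set where the pattern `{j | 0 < ℓ_j x}` is fixed; these sets are convex. It remains to count
the patterns of `w` affine functionals on the plane. Adding a functional `ℓ₀` to `k` others
creates a new pattern only when an old one occurs on both sides of `{ℓ₀ = 0}`, hence (by
convexity) on that line. Along a line each `ℓ_j` changes sign at most once, so at most `k + 1`
patterns occur there, and in total at most `1 + (1 + 2 + ⋯ + w) = 1 + w(w+1)/2`.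
-/

open Module

lemma Finset.ncard_range_le_card_add_one_of_monotone {α ι : Type*} [LinearOrder α]
    {f : α → Finset ι} (hf : Monotone f) {J : Finset ι} (hJ : ∀ a, f a ⊆ J) :
    (Set.range f).ncard ≤ J.card + 1 := by
  calc (Set.range f).ncard ≤ (Set.Iio (J.card + 1)).ncard := by
        refine Set.ncard_le_ncard_of_injOn Finset.card ?_ ?_ (Set.finite_Iio _)
        · rintro _ ⟨a, rfl⟩
          exact Nat.lt_succ_of_le (Finset.card_le_card (hJ a))
        · rintro _ ⟨a, rfl⟩ _ ⟨b, rfl⟩ hab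
          rcases le_total a b with h | h
          · exact Finset.eq_of_subset_of_card_le (hf h) hab.ge
          · exact (Finset.eq_of_subset_of_card_le (hf h) hab.le).symm
    _ = J.card + 1 := by simp

section SignPattern

variable {E ι : Type*} [AddCommGroup E] [Module ℝ E]

lemma Convex.exists_mem_eq_zero_of_nonneg_of_nonpos {s : Set E} (hs : Convex ℝ s)
    (φ : E →ᵃ[ℝ] ℝ) {x y : E} (hx : x ∈ s) (hy : y ∈ s) (hφx : 0 ≤ φ x) (hφy : φ y ≤ 0) :
    ∃ z ∈ s, φ z = 0 := by
  rcases hφx.eq_or_lt with hφx | hφx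
  · exact ⟨x, hx, hφx.symm⟩
  have hden : 0 < φ x - φ y := by linarith
  refine ⟨AffineMap.lineMap x y (φ x / (φ x - φ y)), hs.lineMap_mem hx hy ⟨by positivity, ?_⟩, ?_⟩
  · rw [div_le_one hden]
    linarith
  · rw [AffineMap.apply_lineMap, AffineMap.lineMap_apply_ring']
    field_simp
    ring

lemma exists_setOf_eq_zero_subset_line (hE : finrank ℝ E = 2) (φ : E →ᵃ[ℝ] ℝ)
    (hφ : φ.linear ≠ 0) : ∃ p d : E, {x | φ x = 0} ⊆ Set.range fun t : ℝ => p + t • d := by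
  have : FiniteDimensional ℝ E := Module.finite_of_finrank_eq_succ hE
  have hker : finrank ℝ (LinearMap.ker φ.linear) = 1 := by
    have := Module.Dual.finrank_ker_add_one_of_ne_zero hφ
    omega
  obtain ⟨⟨d, _⟩, -, hd⟩ := (finrank_eq_one_iff' (K := ℝ)).mp hker
  obtain ⟨p, hp⟩ := LinearMap.surjective hφ (-φ 0)
  refine ⟨p, d, fun x hx => ?_⟩
  have hxp : x - p ∈ LinearMap.ker φ.linear := by
    have hdecomp := congrFun φ.decomp x
    simp only [Pi.add_apply] at hdecomp
    rw [LinearMap.mem_ker, map_sub, hp]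
    linarith [hx.symm.trans hdecomp]
  obtain ⟨t, ht⟩ := hd ⟨x - p, hxp⟩
  have htd : t • d = x - p := congrArg Subtype.val ht
  exact ⟨t, by simp only [htd, add_sub_cancel]⟩

/-- Zeros count as inactive, so the level sets of `signPattern ℓ J` partition `E` (they are not
the open cells of the line arrangement). -/
noncomputable def signPattern (ℓ : ι → E →ᵃ[ℝ] ℝ) (J : Finset ι) (x : E) : Finset ι :=
  {j ∈ J | 0 < ℓ j x}

lemma signPattern_empty (ℓ : ι → E →ᵃ[ℝ] ℝ) (x : E) : signPattern ℓ ∅ x = ∅ :=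
  Finset.filter_empty _

lemma signPattern_insert [DecidableEq ι] (ℓ : ι → E →ᵃ[ℝ] ℝ) (j₀ : ι) (J : Finset ι) (x : E) :
    signPattern ℓ (insert j₀ J) x =
      if 0 < ℓ j₀ x then insert j₀ (signPattern ℓ J x) else signPattern ℓ J x :=
  Finset.filter_insert _ _ _

lemma convex_setOf_signPattern_eq (ℓ : ι → E →ᵃ[ℝ] ℝ) (J : Finset ι) (S : Finset ι) :
    Convex ℝ {x | signPattern ℓ J x = S} := by
  rintro x rfl y hy a b ha hb hab
  have hsign : ∀ j ∈ J, (0 < ℓ j y ↔ 0 < ℓ j x) := fun j hj => by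
    simpa [signPattern, hj] using Finset.ext_iff.mp hy j
  ext j
  simp only [signPattern, Finset.mem_filter, Convex.combo_affine_apply hab, smul_eq_mul,
    and_congr_right_iff]
  intro hj
  by_cases hx : 0 < ℓ j x
  · have hy' := (hsign j hj).mpr hx
    simp only [hx, iff_true]
    rcases ha.eq_or_lt with rfl | ha'
    · simp_all
    · nlinarith
  · have hy' : ℓ j y ≤ 0 := not_lt.mp (mt (hsign j hj).mp hx)
    simp only [hx, iff_false, not_lt]
    nlinarith

lemma finite_image_signPattern (ℓ : ι → E →ᵃ[ℝ] ℝ) (J : Finset ι) (s : Set E) :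
    (signPattern ℓ J '' s).Finite :=
  J.powerset.finite_toSet.subset <| by
    rintro _ ⟨x, -, rfl⟩
    exact Finset.mem_powerset.mpr (Finset.filter_subset _ _)

lemma signPattern_image_pos_inter_nonpos_subset (ℓ : ι → E →ᵃ[ℝ] ℝ) (J : Finset ι)
    (φ : E →ᵃ[ℝ] ℝ) :
    signPattern ℓ J '' {x | 0 < φ x} ∩ signPattern ℓ J '' {x | φ x ≤ 0} ⊆
      signPattern ℓ J '' {x | φ x = 0} := by
  rintro S ⟨⟨x, hφx, hx⟩, ⟨y, hφy, hy⟩⟩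
  obtain ⟨z, hz, hφz⟩ := (convex_setOf_signPattern_eq ℓ J S).exists_mem_eq_zero_of_nonneg_of_nonpos
    φ hx hy hφx.le hφy
  exact ⟨z, hφz, hz⟩

lemma ncard_range_signPattern_line_le (ℓ : ι → E →ᵃ[ℝ] ℝ) (J : Finset ι) (p d : E) :
    (Set.range fun t : ℝ => signPattern ℓ J (p + t • d)).ncard ≤ J.card + 1 := by
  classical
  have hline : ∀ j t, ℓ j (p + t • d) = ℓ j p + t * (ℓ j).linear d := fun j t => by
    rw [AffineMap.decomp]
    simp only [Pi.add_apply, map_add, map_smul, smul_eq_mul]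
    ring
  -- Reverse the orientation of the decreasing functionals: then signs only switch on as `t` grows.
  set f : ℝ → Finset ι := fun t => {j ∈ J | (0 < ℓ j (p + t • d) ↔ 0 ≤ (ℓ j).linear d)}
  have hf : Monotone f := by
    intro t t' htt' j
    simp only [f, Finset.mem_filter, hline]
    rintro ⟨hj, ht⟩
    refine ⟨hj, ?_⟩
    rcases le_or_gt 0 ((ℓ j).linear d) with ha | ha
    · have hpos := ht.mpr ha
      exact iff_of_true (by nlinarith) ha
    · have hnonpos := not_lt.mp (mt ht.mp (not_le.mpr ha))
      exact iff_of_false (by nlinarith) (not_le.mpr ha)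
  have hpattern : (fun t : ℝ => signPattern ℓ J (p + t • d)) =
      (fun S => {j ∈ J | (j ∈ S ↔ 0 ≤ (ℓ j).linear d)}) ∘ f := by
    ext t j
    simp only [signPattern, f, Function.comp, Finset.mem_filter]
    tauto
  rw [hpattern, Set.range_comp]
  have hfin : (Set.range f).Finite := J.powerset.finite_toSet.subset <|
    Set.range_subset_iff.mpr fun _ => Finset.mem_powerset.mpr (Finset.filter_subset _ _)
  exact (Set.ncard_image_le hfin).trans
    (Finset.ncard_range_le_card_add_one_of_monotone hf fun _ => Finset.filter_subset _ _)

lemma ncard_signPattern_image_pos_inter_nonpos_le (hE : finrank ℝ E = 2)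
    (ℓ : ι → E →ᵃ[ℝ] ℝ) (J : Finset ι) (φ : E →ᵃ[ℝ] ℝ) :
    (signPattern ℓ J '' {x | 0 < φ x} ∩ signPattern ℓ J '' {x | φ x ≤ 0}).ncard ≤ J.card + 1 := by
  by_cases hφ : φ.linear = 0
  · have hconst : ∀ x, φ x = φ 0 := fun x => by simpa [hφ] using congrFun φ.decomp x
    have hempty : signPattern ℓ J '' {x | 0 < φ x} ∩ signPattern ℓ J '' {x | φ x ≤ 0} = ∅ := by
      refine Set.eq_empty_of_forall_notMem ?_
      rintro S ⟨⟨x, hx : 0 < φ x, -⟩, y, hy : φ y ≤ 0, -⟩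
      linarith [hconst x, hconst y]
    simp [hempty]
  · obtain ⟨p, d, hline⟩ := exists_setOf_eq_zero_subset_line hE φ hφ
    calc _ ≤ (signPattern ℓ J '' Set.range fun t : ℝ => p + t • d).ncard :=
          Set.ncard_le_ncard ((signPattern_image_pos_inter_nonpos_subset ℓ J φ).trans
            (Set.image_mono hline)) (finite_image_signPattern ℓ J _)
      _ ≤ J.card + 1 := by
          rw [← Set.range_comp]
          exact ncard_range_signPattern_line_le ℓ J p d

lemma ncard_range_signPattern_insert_le [DecidableEq ι] (ℓ : ι → E →ᵃ[ℝ] ℝ) (J : Finset ι)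
    (j₀ : ι) :
    (Set.range (signPattern ℓ (insert j₀ J))).ncard ≤ (Set.range (signPattern ℓ J)).ncard +
      (signPattern ℓ J '' {x | 0 < ℓ j₀ x} ∩ signPattern ℓ J '' {x | ℓ j₀ x ≤ 0}).ncard := by
  set Ppos := signPattern ℓ J '' {x | 0 < ℓ j₀ x}
  set Pnonpos := signPattern ℓ J '' {x | ℓ j₀ x ≤ 0}
  have hfin := finite_image_signPattern ℓ J
  have hsub : Set.range (signPattern ℓ (insert j₀ J)) ⊆ insert j₀ '' Ppos ∪ Pnonpos := by
    rintro _ ⟨x, rfl⟩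
    rw [signPattern_insert]
    split_ifs with hx
    · exact Or.inl ⟨_, ⟨x, hx, rfl⟩, rfl⟩
    · exact Or.inr ⟨x, not_lt.mp hx, rfl⟩
  have hunion : Ppos ∪ Pnonpos ⊆ Set.range (signPattern ℓ J) :=
    Set.union_subset (Set.image_subset_range _ _) (Set.image_subset_range _ _)
  calc _ ≤ (insert j₀ '' Ppos ∪ Pnonpos).ncard :=
        Set.ncard_le_ncard hsub (((hfin _).image _).union (hfin _))
    _ ≤ Ppos.ncard + Pnonpos.ncard :=
        (Set.ncard_union_le _ _).trans (Nat.add_le_add_right (Set.ncard_image_le (hfin _)) _)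
    _ = (Ppos ∪ Pnonpos).ncard + (Ppos ∩ Pnonpos).ncard :=
        (Set.ncard_union_add_ncard_inter _ _ (hfin _) (hfin _)).symm
    _ ≤ _ := Nat.add_le_add_right (Set.ncard_le_ncard hunion (by simpa using hfin Set.univ)) _

theorem ncard_range_signPattern_le (hE : finrank ℝ E = 2) (ℓ : ι → E →ᵃ[ℝ] ℝ)
    (J : Finset ι) : (Set.range (signPattern ℓ J)).ncard ≤ 1 + J.card * (J.card + 1) / 2 := by
  classical
  induction J using Finset.induction_on with
  | empty =>
    calc _ ≤ ({∅} : Set (Finset ι)).ncard :=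
          Set.ncard_le_ncard (by rintro _ ⟨x, rfl⟩; exact signPattern_empty ℓ x)
            (Set.finite_singleton _)
      _ ≤ _ := by simp
  | insert j₀ J hj₀ ih =>
    have htriangle : (J.card + 1) * (J.card + 1 + 1) / 2 =
        J.card * (J.card + 1) / 2 + (J.card + 1) := by
      rw [show (J.card + 1) * (J.card + 1 + 1) = J.card * (J.card + 1) + (J.card + 1) * 2 by ring,
        Nat.add_mul_div_right _ _ two_pos]
    rw [Finset.card_insert_of_notMem hj₀, htriangle]
    have hinsert := ncard_range_signPattern_insert_le ℓ J j₀
    have hsplit := ncard_signPattern_image_pos_inter_nonpos_le hE ℓ J (ℓ j₀)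
    omega

lemma relu_eq_pi_of_signPattern_eq {w : ℕ}
    (ℓ : Fin w → E →ᵃ[ℝ] ℝ) {x : E} {S : Finset (Fin w)} (hx : signPattern ℓ .univ x = S) :
    relu (fun j => ℓ j x) = AffineMap.pi (fun j => if j ∈ S then ℓ j else 0) x := by
  ext j
  subst hx
  by_cases hj : 0 < ℓ j x
  · simp [relu, signPattern, hj, hj.le]
  · simp [relu, signPattern, hj, not_lt.mp hj]

end SignPattern

theorem relu_layer_refines_region_general (p w : ℕ)
    (R : Set (Fin 2 → ℝ)) (hR : Convex ℝ R)
    (g : (Fin 2 → ℝ) → (Fin p → ℝ)) (g0 : (Fin 2 → ℝ) →ᵃ[ℝ] (Fin p → ℝ))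
    (hg : ∀ x ∈ R, g x = g0 x)
    (A : Matrix (Fin w) (Fin p) ℝ) (b : Fin w → ℝ) :
    ∃ (N : ℕ), N ≤ 1 + w * (w + 1) / 2 ∧
      ∃ (C : Fin N → Set (Fin 2 → ℝ)) (h : Fin N → ((Fin 2 → ℝ) →ᵃ[ℝ] (Fin w → ℝ))),
        (∀ i, Convex ℝ (C i)) ∧ (⋃ i, C i) = R ∧
        ∀ i, ∀ x ∈ C i, relu (A.mulVec (g x) + b) = h i x := by
  let ℓ : Fin w → (Fin 2 → ℝ) →ᵃ[ℝ] ℝ := fun j => (LinearMap.proj j).toAffineMap.comp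
    (A.mulVecLin.toAffineMap.comp g0 + AffineMap.const ℝ (Fin 2 → ℝ) b)
  have hℓ : ∀ x ∈ R, A.mulVec (g x) + b = fun j => ℓ j x := fun x hx => by
    ext j
    simp [ℓ, hg x hx]
  let e := (Finite.equivFin (Set.range (signPattern ℓ .univ))).symm
  refine ⟨Nat.card (Set.range (signPattern ℓ .univ)), ?_,
    fun i => R ∩ {x | signPattern ℓ .univ x = e i},
    fun i => AffineMap.pi fun j => if j ∈ (e i : Finset (Fin w)) then ℓ j else 0, ?_, ?_, ?_⟩
  · rw [Nat.card_coe_set_eq]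
    simpa using ncard_range_signPattern_le (finrank_fin_fun ℝ) ℓ .univ
  · exact fun i => hR.inter (convex_setOf_signPattern_eq ℓ _ _)
  · refine subset_antisymm (Set.iUnion_subset fun i => Set.inter_subset_left) fun x hx =>
      Set.mem_iUnion.mpr ⟨e.symm ⟨_, x, rfl⟩, hx, ?_⟩
    simp only [Set.mem_ofPred_eq, e.apply_symm_apply]
  · rintro i x ⟨hxR, hx⟩
    rw [hℓ x hxR]
    exact relu_eq_pi_of_signPattern_eq ℓ hx

/-- A ReLU layer applied on top of a function which is affine on a convex region `R`
splits `R` into at most `1 + w(w+1)/2` convex pieces on which the result is affine. -/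
theorem relu_layer_refines_region (p w : ℕ) (hw : 1 ≤ w)
    (R : Set (Fin 2 → ℝ)) (hR : Convex ℝ R)
    (g : (Fin 2 → ℝ) → (Fin p → ℝ)) (g0 : (Fin 2 → ℝ) →ᵃ[ℝ] (Fin p → ℝ))
    (hg : ∀ x ∈ R, g x = g0 x)
    (A : Matrix (Fin w) (Fin p) ℝ) (b : Fin w → ℝ) :
    ∃ (N : ℕ), N ≤ 1 + w * (w + 1) / 2 ∧
      ∃ (C : Fin N → Set (Fin 2 → ℝ)) (h : Fin N → ((Fin 2 → ℝ) →ᵃ[ℝ] (Fin w → ℝ))),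
        (∀ i, Convex ℝ (C i)) ∧ (⋃ i, C i) = R ∧
        ∀ i, ∀ x ∈ C i, relu (A.mulVec (g x) + b) = h i x :=
  relu_layer_refines_region_general p w R hR g g0 hg A b
end
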